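/- arXiv:1312.2490 — 3 statements merged into one kernel-verified Lean document; each statement's English description precedes it below -/
import Mathlib

section
/- For every α_0 > 0, every 0 < δ < 1/3, and every probability distribution P on {0,1}^m, if α is chosen uniformly at random from the set {α_0(1+3δ)^i : 0 ≤ i ≤ ⌊1/δ⌋}, then E_α[ Pr_{y ← P}[ P(y) ∈ [(1-δ)α·2^{-m}, (1+δ)α·2^{-m}] ] ] ≤ δ. -/
/-!
Since `(1 + δ) < (1 - δ)(1 + 3δ)` for `0 < δ < 1/3`, the windows
`[(1 - δ)α, (1 + δ)α]` for the thresholds `α = α₀(1 + 3δ)^i` are pairwise disjoint, so each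
`y` is counted for at most one `i` and the sum over `i` of the probabilities is at most `1`.
Averaging over the `⌊1/δ⌋ + 1 > 1/δ` thresholds then gives at most `δ`.
-/

open scoped BigOperators Classical
open Function

lemma one_add_lt_one_sub_mul_one_add_three_mul {δ : ℝ} (hδ : 0 < δ) (hδ' : δ < 1 / 3) :
    1 + δ < (1 - δ) * (1 + 3 * δ) := by
  nlinarith

lemma pairwise_disjoint_Icc_geometric {δ α c : ℝ} (hδ : 0 < δ) (hδ' : δ < 1 / 3)
    (hα : 0 < α) (hc : 0 < c) :
    Pairwise (Disjoint on fun i : ℕ =>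
      Set.Icc ((1 - δ) * (α * (1 + 3 * δ) ^ i) * c) ((1 + δ) * (α * (1 + 3 * δ) ^ i) * c)) := by
  refine (pairwise_disjoint_on _).2 fun i j hij => Set.disjoint_left.2 fun x hi hj => ?_
  have hgap : (1 + δ) * (1 + 3 * δ) ^ i < (1 - δ) * (1 + 3 * δ) ^ j :=
    calc (1 + δ) * (1 + 3 * δ) ^ i
        < (1 - δ) * (1 + 3 * δ) * (1 + 3 * δ) ^ i := by
          gcongr
          exact one_add_lt_one_sub_mul_one_add_three_mul hδ hδ'
      _ = (1 - δ) * (1 + 3 * δ) ^ (i + 1) := by ring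
      _ ≤ (1 - δ) * (1 + 3 * δ) ^ j := by gcongr <;> linarith
  have hx : (1 + δ) * (1 + 3 * δ) ^ i * (α * c) < (1 - δ) * (1 + 3 * δ) ^ j * (α * c) := by
    gcongr
  linarith [hi.2, hj.1]

lemma sum_sum_filter_mem_le_sum {ι α β M : Type*} [Fintype α] [AddCommMonoid M]
    [PartialOrder M] [IsOrderedAddMonoid M] (s : Finset ι) {f : α → M} (hf : ∀ y, 0 ≤ f y)
    (g : α → β) {S : ι → Set β} [∀ i, DecidablePred fun y => g y ∈ S i]
    (hS : Pairwise (Disjoint on S)) :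
    ∑ i ∈ s, ∑ y ∈ Finset.univ.filter (fun y => g y ∈ S i), f y ≤ ∑ y, f y := by
  rw [← Finset.sum_biUnion]
  · exact Finset.sum_le_univ_sum_of_nonneg hf
  · intro i _ j _ hij
    exact Finset.disjoint_filter.2 fun y _ hi hj => Set.disjoint_left.1 (hS hij) hi hj

lemma one_div_floor_one_div_add_one_le {K : Type*} [Field K] [LinearOrder K]
    [IsStrictOrderedRing K] [FloorSemiring K] {δ : K} (hδ : 0 < δ) :
    1 / ((⌊1 / δ⌋₊ : K) + 1) ≤ δ :=
  (one_div_le (by positivity) hδ).2 (Nat.lt_floor_add_one _).le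

/-- choosing a random threshold. -/
theorem stmt_1 (m : ℕ) (P : (Fin m → Bool) → ℝ)
    (hP0 : ∀ y, 0 ≤ P y) (hP1 : ∑ y, P y = 1)
    (α₀ δ : ℝ) (hα₀ : 0 < α₀) (hδ : 0 < δ) (hδ' : δ < 1/3) :
    (1 / ((⌊1/δ⌋₊ : ℝ) + 1)) *
      ∑ i ∈ Finset.range (⌊1/δ⌋₊ + 1),
        (∑ y ∈ Finset.univ.filter (fun y =>
            P y ∈ Set.Icc ((1 - δ) * (α₀ * (1 + 3*δ)^i) * ((2:ℝ)^m)⁻¹)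
                          ((1 + δ) * (α₀ * (1 + 3*δ)^i) * ((2:ℝ)^m)⁻¹)), P y)
      ≤ δ := by
  have hsum_le_one := sum_sum_filter_mem_le_sum (Finset.range (⌊1/δ⌋₊ + 1)) hP0 P
    (pairwise_disjoint_Icc_geometric hδ hδ' hα₀ (by positivity : (0 : ℝ) < ((2 : ℝ) ^ m)⁻¹))
  rw [hP1] at hsum_le_one
  exact (mul_le_of_le_one_right (by positivity) hsum_le_one).trans
    (one_div_floor_one_div_add_one_le hδ)
end

section
/- Let t ∈ ℕ, let ε̃ > 0, let j* ∈ {0,...,t}, and let d = (d_0,...,d_t) ∈ ℝ^{t+1}. Suppose (i) Σ_{j ≤ j*} d_j ∈ [-δ, δ], and (ii) (1/(t+1)) Σ_{i=0}^{t} |Σ_{j ≤ i} d_j| ≤ 20/t. If moreover 2^{j* ε̃} ≤ 2^m, then Σ_{j ≤ j*} d_j 2^{j ε̃} ≤ (δ + 40 ε̃) · 2^m and Σ_{j ≤ j*} d_j 2^{j ε̃} ≥ -(δ + 40 ε̃) · 2^m. -/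
open Finset Real

/-! Summation by parts turns `∑ j ≤ j*, d j * 2 ^ (j ε̃)` into the boundary term
`2 ^ (j* ε̃) * ∑ j ≤ j*, d j`, which is at most `δ 2 ^ m`, minus the prefix sums weighted by the
increments `2 ^ ((i+1) ε̃) - 2 ^ (i ε̃) ≤ ε̃ 2 ^ m`. The averaging hypothesis bounds the total mass
of the prefix sums by `20 (t+1) / t ≤ 40`. -/

theorem rpow_sub_rpow_le_mul_log_mul_rpow {b : ℝ} (hb : 0 < b) (x y : ℝ) :
    b ^ y - b ^ x ≤ (y - x) * log b * b ^ y := by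
  have h : b ^ x = b ^ y * exp (-((y - x) * log b)) := by
    rw [rpow_def_of_pos hb, rpow_def_of_pos hb, ← exp_add]
    ring_nf
  rw [h]
  nlinarith [one_sub_le_exp_neg ((y - x) * log b), rpow_pos_of_pos hb y]

theorem two_rpow_sub_two_rpow_le {x y : ℝ} (hxy : x ≤ y) :
    (2 : ℝ) ^ y - 2 ^ x ≤ (y - x) * 2 ^ y := by
  have hlog : log 2 ≤ 1 := by linarith [log_le_sub_one_of_pos (zero_lt_two' ℝ)]
  calc (2 : ℝ) ^ y - 2 ^ x ≤ (y - x) * log 2 * 2 ^ y :=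
        rpow_sub_rpow_le_mul_log_mul_rpow two_pos x y
    _ ≤ (y - x) * 2 ^ y := by
        gcongr
        exact mul_le_of_le_one_right (sub_nonneg.mpr hxy) hlog

theorem abs_sum_range_succ_mul_le (d w : ℕ → ℝ) (n : ℕ) {η : ℝ}
    (hw : ∀ i < n, |w (i + 1) - w i| ≤ η) :
    |∑ j ∈ range (n + 1), d j * w j| ≤
      |w n| * |∑ j ∈ range (n + 1), d j| + η * ∑ i ∈ range n, |∑ j ∈ range (i + 1), d j| := by
  have abel := sum_range_by_parts w d (n + 1)
  simp only [smul_eq_mul, Nat.add_sub_cancel] at abel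
  have hcorr : |∑ i ∈ range n, (w (i + 1) - w i) * ∑ j ∈ range (i + 1), d j| ≤
      η * ∑ i ∈ range n, |∑ j ∈ range (i + 1), d j| := by
    rw [mul_sum]
    refine (abs_sum_le_sum_abs _ _).trans (sum_le_sum fun i hi => ?_)
    rw [abs_mul]
    exact mul_le_mul_of_nonneg_right (hw i (mem_range.mp hi)) (abs_nonneg _)
  calc |∑ j ∈ range (n + 1), d j * w j|
      = |w n * ∑ j ∈ range (n + 1), d j -
          ∑ i ∈ range n, (w (i + 1) - w i) * ∑ j ∈ range (i + 1), d j| := by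
        rw [← abel]
        simp only [mul_comm]
    _ ≤ _ := (abs_sub _ _).trans (by rw [abs_mul]; exact add_le_add_right hcorr _)

theorem stmt_4_general (t m : ℕ) (ht : 1 ≤ t) (εt δ : ℝ) (hεt : 0 < εt)
    (jstar : ℕ) (hjstar : jstar ≤ t) (d : ℕ → ℝ)
    (h1 : ∑ j ∈ Finset.range (jstar + 1), d j ∈ Set.Icc (-δ) δ)
    (h2 : (1/((t:ℝ)+1)) * ∑ i ∈ Finset.range (t+1),
            |∑ j ∈ Finset.range (i+1), d j| ≤ 20 / t)
    (hm : (2:ℝ) ^ ((jstar : ℝ) * εt) ≤ (2:ℝ)^m) :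
    (∑ j ∈ Finset.range (jstar + 1), d j * (2:ℝ) ^ ((j:ℝ) * εt))
        ≤ (δ + 40 * εt) * (2:ℝ)^m ∧
    -((δ + 40 * εt) * (2:ℝ)^m) ≤
      ∑ j ∈ Finset.range (jstar + 1), d j * (2:ℝ) ^ ((j:ℝ) * εt) := by
  set w : ℕ → ℝ := fun j => (2:ℝ) ^ ((j:ℝ) * εt) with hw
  have hw_le : ∀ j ≤ jstar, w j ≤ 2 ^ m := fun j hj =>
    (rpow_le_rpow_of_exponent_le one_le_two (by gcongr)).trans hm
  have hstep : ∀ i < jstar, |w (i + 1) - w i| ≤ εt * 2 ^ m := by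
    intro i hi
    have hexp : (i:ℝ) * εt ≤ ((i + 1 : ℕ) : ℝ) * εt := by gcongr; simp
    have hinc := two_rpow_sub_two_rpow_le hexp
    rw [abs_of_nonneg (sub_nonneg.mpr (rpow_le_rpow_of_exponent_le one_le_two hexp))]
    calc w (i + 1) - w i ≤ εt * w (i + 1) := by simpa [hw, add_mul] using hinc
      _ ≤ εt * 2 ^ m := by gcongr; exact hw_le _ hi
  have hmass : ∑ i ∈ range (t + 1), |∑ j ∈ range (i + 1), d j| ≤ 40 := by
    have htpos : (0:ℝ) < t := by exact_mod_cast ht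
    have ht1 : (1:ℝ) ≤ t := by exact_mod_cast ht
    rw [one_div, inv_mul_le_iff₀ (by positivity)] at h2
    calc _ ≤ ((t:ℝ) + 1) * (20 / t) := h2
      _ ≤ 40 := by rw [mul_div_assoc', div_le_iff₀ htpos]; linarith
  have hmass_jstar : ∑ i ∈ range jstar, |∑ j ∈ range (i + 1), d j| ≤ 40 :=
    (sum_le_sum_of_subset_of_nonneg (range_subset_range.mpr (by omega))
      fun _ _ _ => abs_nonneg _).trans hmass
  have hbound : |∑ j ∈ range (jstar + 1), d j * w j| ≤ (δ + 40 * εt) * 2 ^ m := by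
    refine (abs_sum_range_succ_mul_le d w jstar hstep).trans ?_
    rw [abs_of_pos (rpow_pos_of_pos two_pos _)]
    have := mul_le_mul (hw_le jstar le_rfl) (abs_le.mpr h1) (abs_nonneg _) (by positivity)
    nlinarith [mul_le_mul_of_nonneg_left hmass_jstar (by positivity : 0 ≤ εt * (2:ℝ) ^ m)]
  exact ⟨(abs_le.mp hbound).2, (abs_le.mp hbound).1⟩

/-- core lemma bounding the weighted prefix sum. -/
theorem stmt_4 (t m : ℕ) (ht : 1 ≤ t) (εt δ : ℝ) (hεt : 0 < εt) (hδ : 0 ≤ δ)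
    (jstar : ℕ) (hjstar : jstar ≤ t) (d : ℕ → ℝ)
    (h1 : ∑ j ∈ Finset.range (jstar + 1), d j ∈ Set.Icc (-δ) δ)
    (h2 : (1/((t:ℝ)+1)) * ∑ i ∈ Finset.range (t+1),
            |∑ j ∈ Finset.range (i+1), d j| ≤ 20 / t)
    (hm : (2:ℝ) ^ ((jstar : ℝ) * εt) ≤ (2:ℝ)^m) :
    (∑ j ∈ Finset.range (jstar + 1), d j * (2:ℝ) ^ ((j:ℝ) * εt))
        ≤ (δ + 40 * εt) * (2:ℝ)^m ∧
    -((δ + 40 * εt) * (2:ℝ)^m) ≤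
      ∑ j ∈ Finset.range (jstar + 1), d j * (2:ℝ) ^ ((j:ℝ) * εt) :=
  stmt_4_general t m ht εt δ hεt jstar hjstar d h1 h2 hm
end

section
/- Let d = (d_0,...,d_t) ∈ ℝ^{t+1} and j* ≤ t. Define d' ∈ ℝ^{t+1} as the unique vector such that for all i < j*, Σ_{j≤i} d'_j = min{Σ_{j≤i} d_j, 0}, and Σ_{j≤j*} d'_j = Σ_{j≤j*} d_j, and d'_j = d_j for j > j*. Then: (1) for all i ∈ {0,...,t}, |Σ_{j≤i} d'_j| ≤ |Σ_{j≤i} d_j|, and (2) Σ_{j≤j*} d'_j 2^{jε̃} ≥ Σ_{j≤j*} d_j 2^{jε̃} for any ε̃ > 0. -/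
open Finset

/-
Beyond `j*` the two vectors agree and their prefix sums agree at `j*`, so all later prefix sums
coincide; before `j*` the prefix sums of `d'` are `min (·) 0` of those of `d`, which shrinks
absolute values. For the weighted sums, Abel summation writes `∑ dⱼ wⱼ` as
`w_{j*} · (total) - ∑_{i<j*} (w_{i+1} - wᵢ) · (i-th prefix sum)`; the totals agree, the increments
of `wⱼ = 2^{jε̃}` are nonnegative, and each prefix sum of `d'` is at most that of `d`.
-/

theorem abs_min_zero_le {α : Type*} [AddCommGroup α] [LinearOrder α] [IsOrderedAddMonoid α]
    (a : α) : |min a 0| ≤ |a| := by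
  simpa using abs_min_le_max_abs_abs (a := a) (b := 0)

theorem sum_range_succ_eq_of_sum_range_succ_eq {M : Type*} [AddCommMonoid M] {f g : ℕ → M}
    {n : ℕ} (hn : ∑ j ∈ range (n + 1), f j = ∑ j ∈ range (n + 1), g j)
    (hgt : ∀ j, n < j → f j = g j) {i : ℕ} (hi : n ≤ i) :
    ∑ j ∈ range (i + 1), f j = ∑ j ∈ range (i + 1), g j := by
  induction i, hi using Nat.le_induction with
  | base => exact hn
  | succ i hi ih => rw [sum_range_succ f, sum_range_succ g, ih, hgt _ (by omega)]

theorem sum_mul_le_sum_mul_of_prefix_sums_le {R : Type*} [CommRing R] [LinearOrder R]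
    [IsStrictOrderedRing R] {f g w : ℕ → R} {n : ℕ} (hw : Monotone w)
    (hpre : ∀ i < n, ∑ j ∈ range (i + 1), g j ≤ ∑ j ∈ range (i + 1), f j)
    (htot : ∑ j ∈ range (n + 1), f j = ∑ j ∈ range (n + 1), g j) :
    ∑ j ∈ range (n + 1), f j * w j ≤ ∑ j ∈ range (n + 1), g j * w j := by
  have abel (h : ℕ → R) : ∑ j ∈ range (n + 1), h j * w j =
      w n * ∑ j ∈ range (n + 1), h j -
        ∑ i ∈ range n, (w (i + 1) - w i) * ∑ j ∈ range (i + 1), h j := by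
    simpa only [smul_eq_mul, mul_comm (w _), Nat.add_sub_cancel] using
      sum_range_by_parts w h (n + 1)
  rw [abel f, abel g, htot]
  refine sub_le_sub_left (sum_le_sum fun i hi => ?_) _
  exact mul_le_mul_of_nonneg_left (hpre i (mem_range.mp hi)) (sub_nonneg.mpr (hw i.le_succ))

theorem stmt_5_general (t : ℕ) (jstar : ℕ)
    (εt : ℝ) (hεt : 0 < εt) (d d' : ℕ → ℝ)
    (hlt : ∀ i < jstar,
      ∑ j ∈ Finset.range (i+1), d' j = min (∑ j ∈ Finset.range (i+1), d j) 0)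
    (heq : ∑ j ∈ Finset.range (jstar+1), d' j = ∑ j ∈ Finset.range (jstar+1), d j)
    (hgt : ∀ j, jstar < j → d' j = d j) :
    (∀ i ≤ t, |∑ j ∈ Finset.range (i+1), d' j| ≤ |∑ j ∈ Finset.range (i+1), d j|) ∧
    ∑ j ∈ Finset.range (jstar+1), d j * (2:ℝ) ^ ((j:ℝ) * εt) ≤
      ∑ j ∈ Finset.range (jstar+1), d' j * (2:ℝ) ^ ((j:ℝ) * εt) := by
  refine ⟨fun i _ => ?_, ?_⟩
  · rcases lt_or_ge i jstar with hi | hi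
    · rw [hlt i hi]
      exact abs_min_zero_le _
    · rw [sum_range_succ_eq_of_sum_range_succ_eq heq hgt hi]
  · have hw : Monotone fun j : ℕ => (2:ℝ) ^ ((j:ℝ) * εt) := fun i j hij =>
      Real.rpow_le_rpow_of_exponent_le one_le_two (by gcongr)
    refine sum_mul_le_sum_mul_of_prefix_sums_le hw (fun i hi => ?_) heq.symm
    rw [hlt i hi]
    exact min_le_left _ _

/-- properties of the truncated-prefix-sum vector `d'`. -/
theorem stmt_5 (t : ℕ) (jstar : ℕ) (hjstar : jstar ≤ t)
    (εt : ℝ) (hεt : 0 < εt) (d d' : ℕ → ℝ)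
    (hlt : ∀ i < jstar,
      ∑ j ∈ Finset.range (i+1), d' j = min (∑ j ∈ Finset.range (i+1), d j) 0)
    (heq : ∑ j ∈ Finset.range (jstar+1), d' j = ∑ j ∈ Finset.range (jstar+1), d j)
    (hgt : ∀ j, jstar < j → d' j = d j) :
    (∀ i ≤ t, |∑ j ∈ Finset.range (i+1), d' j| ≤ |∑ j ∈ Finset.range (i+1), d j|) ∧
    ∑ j ∈ Finset.range (jstar+1), d j * (2:ℝ) ^ ((j:ℝ) * εt) ≤
      ∑ j ∈ Finset.range (jstar+1), d' j * (2:ℝ) ^ ((j:ℝ) * εt) :=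
  stmt_5_general t jstar εt hεt d d' hlt heq hgt
end
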